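/- arXiv:math/0005167 — 2 statements merged into one kernel-verified Lean document; each statement's English description precedes it below -/
import Mathlib

section
/- Let H be a complex Hilbert space and let φ : B(H) → B(H) be a *-semigroup endomorphism with φ(0) = 0 and φ(I) = I, such that φ(P) + φ(I − P) = I for every projection P ∈ B(H). Then φ is orthoadditive on projections: for any projections P, Q ∈ B(H) with PQ = QP = 0, one has φ(P + Q) = φ(P) + φ(Q). -/
theorem stmt5 (H : Type*) [NormedAddCommGroup H] [InnerProductSpace ℂ H]
    [CompleteSpace H] (φ : (H →L[ℂ] H) → (H →L[ℂ] H))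
    (hmul : ∀ A B : H →L[ℂ] H, φ (A * B) = φ A * φ B)
    (hstar : ∀ A : H →L[ℂ] H, φ (star A) = star (φ A))
    (h0 : φ 0 = 0) (h1 : φ 1 = 1)
    (hcompl : ∀ P : H →L[ℂ] H, IsSelfAdjoint P → IsIdempotentElem P →
      φ P + φ (1 - P) = 1) :
    ∀ P Q : H →L[ℂ] H, IsSelfAdjoint P → IsIdempotentElem P →
      IsSelfAdjoint Q → IsIdempotentElem Q → P * Q = 0 → Q * P = 0 →
      φ (P + Q) = φ P + φ Q := by
  intro P Q hPsa hPi hQsa hQi hPQ hQP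
  have hRsa : IsSelfAdjoint (P + Q) := hPsa.add hQsa
  have hRi : IsIdempotentElem (P + Q) := by
    unfold IsIdempotentElem at *
    rw [mul_add, add_mul, add_mul, hPi, hQi, hPQ, hQP]
    abel
  have a1 : φ (1 - P) = 1 - φ P := eq_sub_of_add_eq' (hcompl P hPsa hPi)
  have a2 : φ (1 - Q) = 1 - φ Q := eq_sub_of_add_eq' (hcompl Q hQsa hQi)
  have a3 : φ (P + Q) = 1 - φ (1 - (P + Q)) :=
    eq_sub_of_add_eq (hcompl (P + Q) hRsa hRi)
  have hPQ0 : φ P * φ Q = 0 := by rw [← hmul, hPQ, h0]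
  have hprod : φ (1 - (P + Q)) = φ (1 - P) * φ (1 - Q) := by
    rw [← hmul]
    congr 1
    rw [mul_sub, sub_mul, sub_mul, one_mul, mul_one, hPQ]
    abel
  rw [a3, hprod, a1, a2, mul_sub, sub_mul, sub_mul, one_mul, mul_one, hPQ0]
  abel
end

section
/- Let H be a complex separable infinite-dimensional Hilbert space and let φ : B(H) → B(H) be a *-semigroup endomorphism which is uniformly continuous on every commutative C*-subalgebra, with φ(0) = 0 and φ(I) = I. Then for every projection P ∈ B(H), φ(P) + φ(I − P) = I. -/
/-!
On the commutative algebra spanned by `P` and `1 - P`, `φ` becomes a uniformly continuous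
multiplicative map `ψ (a, b) = φ (a • P + b • (1 - P))` on `ℂ × ℂ` with `ψ 0 = 0`. Its mixed part
`m (a, b) = ψ (a, b) - ψ (a, 0) - ψ (0, b)` is again multiplicative, and uniform continuity makes
it uniformly small near both coordinate axes. So the idempotent `m (1, 1) = m (c⁻¹, c) * m (c, c⁻¹)`
has norm `< 1` for small `c ≠ 0`, hence vanishes, i.e. `φ 1 = φ P + φ (1 - P)`.
-/

theorem IsIdempotentElem.eq_zero_of_norm_lt_one {A : Type*} [NormedRing A] {e : A}
    (he : IsIdempotentElem e) (hlt : ‖e‖ < 1) : e = 0 := by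
  by_contra hne
  have hpos : 0 < ‖e‖ := norm_pos_iff.mpr hne
  have : ‖e‖ ≤ ‖e‖ * ‖e‖ := by simpa only [he.eq] using norm_mul_le e e
  nlinarith

namespace MulMapProd

variable {𝕜 A : Type*} [NontriviallyNormedField 𝕜] [NormedRing A]

def mixedPart (ψ : 𝕜 × 𝕜 → A) (x : 𝕜 × 𝕜) : A := ψ x - ψ (x.1, 0) - ψ (0, x.2)

variable {ψ : 𝕜 × 𝕜 → A}

theorem mixedPart_mul (hmul : ∀ x y, ψ (x * y) = ψ x * ψ y) (h0 : ψ 0 = 0) (x y : 𝕜 × 𝕜) :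
    mixedPart ψ (x * y) = mixedPart ψ x * mixedPart ψ y := by
  obtain ⟨a, b⟩ := x
  obtain ⟨c, d⟩ := y
  have h00 : ψ (0, 0) = 0 := h0
  have key : ∀ a b c d : 𝕜, ψ (a, b) * ψ (c, d) = ψ (a * c, b * d) := fun a b c d =>
    (hmul (a, b) (c, d)).symm
  simp only [mixedPart, Prod.mk_mul_mk, sub_mul, mul_sub, key, mul_zero, zero_mul, h00]
  abel

theorem exists_norm_mixedPart_lt (huc : UniformContinuous ψ) (h0 : ψ 0 = 0) {ε : ℝ}
    (hε : 0 < ε) : ∃ δ > 0, ∀ x : 𝕜 × 𝕜, min ‖x.1‖ ‖x.2‖ < δ → ‖mixedPart ψ x‖ < ε := by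
  obtain ⟨δ, hδ, hψ⟩ := Metric.uniformContinuous_iff.mp huc (ε / 2) (half_pos hε)
  have hclose : ∀ {x y : 𝕜 × 𝕜}, dist x y < δ → ‖ψ x - ψ y‖ < ε / 2 := fun h =>
    dist_eq_norm (ψ _) (ψ _) ▸ hψ h
  refine ⟨δ, hδ, fun ⟨a, b⟩ hab => ?_⟩
  have h00 : ψ (0, 0) = 0 := h0
  rcases min_lt_iff.mp hab with ha | hb
  · have e : mixedPart ψ (a, b) = (ψ (a, b) - ψ (0, b)) - (ψ (a, 0) - ψ (0, 0)) := by
      rw [mixedPart, h00]; abel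
    have h1 := hclose (x := (a, b)) (y := (0, b)) (by simpa [Prod.dist_eq, dist_eq_norm] using ha)
    have h2 := hclose (x := (a, 0)) (y := (0, 0)) (by simpa [Prod.dist_eq, dist_eq_norm] using ha)
    rw [e]
    linarith [norm_sub_le (ψ (a, b) - ψ (0, b)) (ψ (a, 0) - ψ (0, 0))]
  · have e : mixedPart ψ (a, b) = (ψ (a, b) - ψ (a, 0)) - (ψ (0, b) - ψ (0, 0)) := by
      rw [mixedPart, h00]; abel
    have h1 := hclose (x := (a, b)) (y := (a, 0)) (by simpa [Prod.dist_eq, dist_eq_norm] using hb)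
    have h2 := hclose (x := (0, b)) (y := (0, 0)) (by simpa [Prod.dist_eq, dist_eq_norm] using hb)
    rw [e]
    linarith [norm_sub_le (ψ (a, b) - ψ (a, 0)) (ψ (0, b) - ψ (0, 0))]

theorem mixedPart_one_eq_zero (hmul : ∀ x y, ψ (x * y) = ψ x * ψ y) (h0 : ψ 0 = 0)
    (huc : UniformContinuous ψ) : mixedPart ψ 1 = 0 := by
  have hidem : IsIdempotentElem (mixedPart ψ 1) := by
    rw [IsIdempotentElem, ← mixedPart_mul hmul h0, one_mul]
  obtain ⟨δ, hδ, hsmall⟩ := exists_norm_mixedPart_lt huc h0 one_pos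
  obtain ⟨c, hc0, hcδ⟩ := NormedField.exists_norm_lt 𝕜 hδ
  have hc : c ≠ 0 := norm_pos_iff.mp hc0
  have hfactor : mixedPart ψ 1 = mixedPart ψ (c⁻¹, c) * mixedPart ψ (c, c⁻¹) := by
    rw [← mixedPart_mul hmul h0, Prod.mk_mul_mk, inv_mul_cancel₀ hc, mul_inv_cancel₀ hc]
    rfl
  refine hidem.eq_zero_of_norm_lt_one ?_
  rw [hfactor]
  calc _ ≤ ‖mixedPart ψ (c⁻¹, c)‖ * ‖mixedPart ψ (c, c⁻¹)‖ := norm_mul_le _ _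
    _ < 1 := mul_lt_one_of_nonneg_of_lt_one_left (norm_nonneg _)
        (hsmall _ (min_lt_of_right_lt hcδ)) (hsmall _ (min_lt_of_left_lt hcδ)).le

end MulMapProd

theorem IsIdempotentElem.smul_add_smul_one_sub_mul {R A : Type*} [CommRing R] [Ring A]
    [Algebra R A] {p : A} (hp : IsIdempotentElem p) (a b c d : R) :
    (a • p + b • (1 - p)) * (c • p + d • (1 - p)) = (a * c) • p + (b * d) • (1 - p) := by
  simp only [add_mul, mul_add, smul_mul_smul_comm, hp.eq, hp.one_sub.eq, mul_sub, sub_mul,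
    mul_one, one_mul, sub_self, smul_zero, add_zero, zero_add]

open MulMapProd in
theorem map_one_eq_map_add_map_one_sub {𝕜 A B : Type*} [NontriviallyNormedField 𝕜]
    [NormedRing A] [NormedAlgebra 𝕜 A] [NormedRing B] {φ : A → B}
    (hmul : ∀ a b, φ (a * b) = φ a * φ b) (h0 : φ 0 = 0) {p : A} (hp : IsIdempotentElem p)
    {S : Set A} (hS : ∀ a b : 𝕜, a • p + b • (1 - p) ∈ S) (huc : UniformContinuousOn φ S) :
    φ 1 = φ p + φ (1 - p) := by
  let ι : 𝕜 × 𝕜 →L[𝕜] A :=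
    (ContinuousLinearMap.fst 𝕜 𝕜 𝕜).smulRight p + (ContinuousLinearMap.snd 𝕜 𝕜 𝕜).smulRight (1 - p)
  have hι : ∀ x, ι x = x.1 • p + x.2 • (1 - p) := fun _ => rfl
  have hψuc : UniformContinuous (φ ∘ ι) := by
    rw [← uniformContinuousOn_univ]
    exact huc.comp ι.uniformContinuous.uniformContinuousOn fun x _ => hι x ▸ hS x.1 x.2
  have hψmul : ∀ x y, (φ ∘ ι) (x * y) = (φ ∘ ι) x * (φ ∘ ι) y := fun x y => by
    simp only [Function.comp_apply, hι, ← hmul, hp.smul_add_smul_one_sub_mul, Prod.fst_mul,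
      Prod.snd_mul]
  have hmixed := mixedPart_one_eq_zero hψmul (by simpa using h0) hψuc
  simp only [mixedPart, Function.comp_apply, hι] at hmixed
  simpa [sub_sub, sub_eq_zero] using hmixed

theorem stmt15_general (H : Type*) [NormedAddCommGroup H] [InnerProductSpace ℂ H]
    [CompleteSpace H]
    (φ : (H →L[ℂ] H) → (H →L[ℂ] H))
    (hmul : ∀ A B : H →L[ℂ] H, φ (A * B) = φ A * φ B)
    (hcont : ∀ S : StarSubalgebra ℂ (H →L[ℂ] H), IsClosed (S : Set (H →L[ℂ] H)) →
      (∀ a ∈ S, ∀ b ∈ S, a * b = b * a) → UniformContinuousOn φ (S : Set (H →L[ℂ] H)))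
    (h0 : φ 0 = 0) (h1 : φ 1 = 1) :
    ∀ P : H →L[ℂ] H, IsSelfAdjoint P → IsIdempotentElem P →
      φ P + φ (1 - P) = 1 := by
  intro P hsa hidem
  have : IsStarNormal P := hsa.isStarNormal
  let S := StarAlgebra.elemental ℂ P
  have hScomm : ∀ a ∈ S, ∀ b ∈ S, a * b = b * a := fun a ha b hb =>
    congrArg Subtype.val (mul_comm (⟨a, ha⟩ : S) ⟨b, hb⟩)
  have hPS : ∀ a b : ℂ, a • P + b • (1 - P) ∈ S := fun a b =>
    add_mem (S.smul_mem (StarAlgebra.elemental.self_mem ℂ P) a)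
      (S.smul_mem (sub_mem (one_mem S) (StarAlgebra.elemental.self_mem ℂ P)) b)
  rw [← map_one_eq_map_add_map_one_sub hmul h0 hidem hPS
    (hcont S (StarAlgebra.elemental.isClosed ℂ P) hScomm), h1]

theorem stmt15 (H : Type*) [NormedAddCommGroup H] [InnerProductSpace ℂ H]
    [CompleteSpace H] [TopologicalSpace.SeparableSpace H]
    (hinf : ¬ FiniteDimensional ℂ H)
    (φ : (H →L[ℂ] H) → (H →L[ℂ] H))
    (hmul : ∀ A B : H →L[ℂ] H, φ (A * B) = φ A * φ B)
    (hstar : ∀ A : H →L[ℂ] H, φ (star A) = star (φ A))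
    (hcont : ∀ S : StarSubalgebra ℂ (H →L[ℂ] H), IsClosed (S : Set (H →L[ℂ] H)) →
      (∀ a ∈ S, ∀ b ∈ S, a * b = b * a) → UniformContinuousOn φ (S : Set (H →L[ℂ] H)))
    (h0 : φ 0 = 0) (h1 : φ 1 = 1) :
    ∀ P : H →L[ℂ] H, IsSelfAdjoint P → IsIdempotentElem P →
      φ P + φ (1 - P) = 1 :=
  stmt15_general H φ hmul hcont h0 h1
end
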